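/- Let σ_0 = 1, σ_d = 0, and σ_1, ..., σ_{d-1} be the elementary symmetric polynomials in a_1, ..., a_{d-1} ∈ 𝔻, defining the canonical Blaschke product B(z) = (∑_{k=0}^{d} (−1)^k σ_k z^{d−k}) / (∑_{k=0}^{d-1} (−1)^k conj(σ_k) z^k). If z_1, z_2 are on the unit circle with B(z_1) = B(z_2), then ∑_{j=1}^d ∑_{k=1}^d (−1)^{j+k} conj(σ_{d−j}) σ_{d−k} (z_1^k z_2^{d−j} − z_1^{d−j} z_2^k) = 0. -/

import Mathlib

/-!
On the unit circle `1 - conj(a_k) z` does not vanish, so `B(z₁) = B(z₂)` clears denominators to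
`P(z₁) Q(z₂) = P(z₂) Q(z₁)` with `P(z) = z ∏ (z - a_k)` and `Q(z) = ∏ (1 - conj(a_k) z)`.
By Vieta's formulas the two sums `∑ (-1)^k σ_{d-k} z^k` and `∑ (-1)^j conj(σ_{d-j}) z^{d-j}`
are `(-1)^d P(z)` and `(-1)^d Q(z)`, and the double sum factors as
`(-1)^d Q(z₂) · (-1)^d P(z₁) - (-1)^d Q(z₁) · (-1)^d P(z₂)`.
-/

open Complex ComplexConjugate Finset

theorem Finset.prod_sub_mul_eq_sum_esymm {ι R : Type*} [CommRing R] (s : Finset ι) (f : ι → R)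
    (x y : R) :
    ∏ i ∈ s, (x - f i * y) = ∑ n ∈ range (#s + 1),
      (-1) ^ n * (∑ t ∈ s.powersetCard n, ∏ i ∈ t, f i) * x ^ (#s - n) * y ^ n := by
  classical
  have hterm : ∀ n, ∀ t ∈ s.powersetCard n, (∏ i ∈ t, -(f i * y)) * ∏ _i ∈ s \ t, x =
      (-1) ^ n * (∏ i ∈ t, f i) * x ^ (#s - n) * y ^ n := by
    intro n t ht
    obtain ⟨hts, rfl⟩ := mem_powersetCard.mp ht
    rw [prod_neg, prod_mul_distrib, prod_const, prod_const, card_sdiff_of_subset hts]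
    ring
  simp_rw [sub_eq_neg_add, prod_add, sum_powerset]
  refine sum_congr rfl fun n _ => ?_
  rw [sum_congr rfl (hterm n), ← sum_mul, ← sum_mul, ← mul_sum]

theorem Finset.sum_Icc_one_eq_sum_range_sub {M : Type*} [AddCommMonoid M] (d : ℕ) (g : ℕ → M) :
    ∑ k ∈ Icc 1 d, g k = ∑ n ∈ range d, g (d - n) := by
  refine sum_nbij' (fun k => d - k) (fun n => d - n) ?_ ?_ ?_ ?_ ?_ <;>
    intro k hk <;> simp only [mem_Icc, mem_range] at hk
  · simp only [mem_range]; omega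
  · simp only [mem_Icc]; omega
  · omega
  · omega
  · simp only [show d - (d - k) = k by omega]

theorem neg_one_pow_sub_eq_pow_add {R : Type*} [Monoid R] [HasDistribNeg R] {d n : ℕ}
    (h : n ≤ d) : (-1 : R) ^ (d - n) = (-1) ^ (d + n) := by
  simp [show d + n = d - n + 2 * n by omega, pow_add, pow_mul]

section Vieta

variable {ι R : Type*} [Fintype ι] [CommRing R] {d : ℕ}

theorem sum_Icc_neg_one_pow_mul_esymm_mul_pow (a : ι → R) (hd : Fintype.card ι + 1 = d) (z : R) :
    ∑ k ∈ Icc 1 d, (-1) ^ k * (∑ t ∈ univ.powersetCard (d - k), ∏ i ∈ t, a i) * z ^ k =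
      (-1) ^ d * (z * ∏ i, (z - a i)) := by
  have hvieta := prod_sub_mul_eq_sum_esymm univ a z 1
  simp only [mul_one, one_pow, card_univ] at hvieta
  rw [sum_Icc_one_eq_sum_range_sub, ← hd, hvieta, mul_sum, mul_sum]
  refine sum_congr rfl fun n hn => ?_
  have hn : n ≤ Fintype.card ι := Nat.lt_succ_iff.mp (mem_range.mp hn)
  rw [neg_one_pow_sub_eq_pow_add (by omega), Nat.sub_sub_self (by omega),
    show Fintype.card ι + 1 - n = Fintype.card ι - n + 1 by omega]
  ring

theorem sum_Icc_neg_one_pow_mul_esymm_mul_pow_sub (a : ι → R) (hd : Fintype.card ι + 1 = d)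
    (z : R) :
    ∑ j ∈ Icc 1 d, (-1) ^ j * (∑ t ∈ univ.powersetCard (d - j), ∏ i ∈ t, a i) * z ^ (d - j) =
      (-1) ^ d * ∏ i, (1 - a i * z) := by
  rw [sum_Icc_one_eq_sum_range_sub, ← hd, prod_sub_mul_eq_sum_esymm, card_univ, mul_sum]
  refine sum_congr rfl fun n hn => ?_
  have hn : n ≤ Fintype.card ι := Nat.lt_succ_iff.mp (mem_range.mp hn)
  rw [neg_one_pow_sub_eq_pow_add (by omega), Nat.sub_sub_self (by omega)]
  ring

end Vieta

theorem one_sub_conj_mul_ne_zero {a z : ℂ} (ha : ‖a‖ < 1) (hz : ‖z‖ = 1) :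
    1 - conj a * z ≠ 0 := by
  intro h
  have hnorm := congrArg norm (sub_eq_zero.mp h).symm
  rw [norm_mul, norm_conj, hz, mul_one, norm_one] at hnorm
  exact ha.ne hnorm

theorem exterior_curve_symmetric_relation (d : ℕ) (hd : 1 ≤ d)
    (a : Fin (d - 1) → ℂ) (ha : ∀ k, ‖a k‖ < 1)
    (σ : ℕ → ℂ)
    (hσ : ∀ n, σ n = ∑ t ∈ (Finset.univ : Finset (Fin (d - 1))).powersetCard n,
      ∏ i ∈ t, a i)
    (B : ℂ → ℂ)
    (hB : ∀ z, B z = z * ∏ k, (z - a k) / (1 - (starRingEnd ℂ) (a k) * z))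
    (z₁ z₂ : ℂ) (hz₁ : ‖z₁‖ = 1) (hz₂ : ‖z₂‖ = 1)
    (heq : B z₁ = B z₂) :
    ∑ j ∈ Finset.Icc 1 d, ∑ k ∈ Finset.Icc 1 d,
      (-1 : ℂ) ^ (j + k) * (starRingEnd ℂ) (σ (d - j)) * σ (d - k) *
        (z₁ ^ k * z₂ ^ (d - j) - z₁ ^ (d - j) * z₂ ^ k) = 0 := by
  have hcard : Fintype.card (Fin (d - 1)) + 1 = d := by rw [Fintype.card_fin]; omega
  have hσconj (n : ℕ) : conj (σ n) = ∑ t ∈ univ.powersetCard n, ∏ i ∈ t, conj (a i) := by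
    simp only [hσ, map_sum, map_prod]
  have hP (w : ℂ) : ∑ k ∈ Icc 1 d, (-1) ^ k * σ (d - k) * w ^ k =
      (-1) ^ d * (w * ∏ k, (w - a k)) := by
    simpa only [hσ] using sum_Icc_neg_one_pow_mul_esymm_mul_pow a hcard w
  have hQ (w : ℂ) : ∑ j ∈ Icc 1 d, (-1) ^ j * conj (σ (d - j)) * w ^ (d - j) =
      (-1) ^ d * ∏ k, (1 - conj (a k) * w) := by
    simpa only [hσconj, Function.comp_apply] using sum_Icc_neg_one_pow_mul_esymm_mul_pow_sub (conj ∘ a) hcard w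
  have hden {w : ℂ} (hw : ‖w‖ = 1) : ∏ k, (1 - conj (a k) * w) ≠ 0 :=
    prod_ne_zero_iff.mpr fun k _ => one_sub_conj_mul_ne_zero (ha k) hw
  have hcross : z₁ * (∏ k, (z₁ - a k)) * ∏ k, (1 - conj (a k) * z₂) =
      z₂ * (∏ k, (z₂ - a k)) * ∏ k, (1 - conj (a k) * z₁) := by
    rwa [hB, hB, prod_div_distrib, prod_div_distrib, ← mul_div_assoc, ← mul_div_assoc,
      div_eq_div_iff (hden hz₁) (hden hz₂)] at heq
  calc _ = (∑ j ∈ Icc 1 d, (-1) ^ j * conj (σ (d - j)) * z₂ ^ (d - j)) *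
          (∑ k ∈ Icc 1 d, (-1) ^ k * σ (d - k) * z₁ ^ k) -
        (∑ j ∈ Icc 1 d, (-1) ^ j * conj (σ (d - j)) * z₁ ^ (d - j)) *
          (∑ k ∈ Icc 1 d, (-1) ^ k * σ (d - k) * z₂ ^ k) := by
        simp only [sum_mul_sum, ← sum_sub_distrib]
        exact sum_congr rfl fun j _ => sum_congr rfl fun k _ => by ring
    _ = 0 := by
        rw [hP, hP, hQ, hQ]
        linear_combination ((-1) ^ d) ^ 2 * hcross
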